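/- For every real α with α ≠ 1/2 and every real x with 0 < |x| < 1, the series ∑_{r=0}^∞ ((α)_r (α+1/2)_r / ((3/2)_r · r!)) (-x²)^r converges absolutely and equals (1+x²)^{(1-2α)/2} sin((1-2α) arctan x) / ((1-2α) x). -/

import Mathlib

/-!
By Legendre duplication, `(2α)_{2r} = 4^r (α)_r (α + 1/2)_r` and `(2r + 1)! = 4^r (3/2)_r r!`, so
the `r`-th coefficient of the series is `binom(1 - 2α, 2r + 1) / (1 - 2α)`. Hence
`(1 - 2α) x` times the series is the odd part of the binomial series of `(1 + i x)^(1 - 2α)`,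
which is its imaginary part `|1 + i x|^(1 - 2α) sin ((1 - 2α) arg (1 + i x))`, with
`arg (1 + i x) = arctan x`.
-/

open Nat

theorem ascPochhammer_eval_two_mul {K : Type*} [Field K] [NeZero (2 : K)] (a : K) (n : ℕ) :
    (ascPochhammer K (2 * n)).eval (2 * a) =
      4 ^ n * ((ascPochhammer K n).eval a * (ascPochhammer K n).eval (a + 1 / 2)) := by
  induction n with
  | zero => simp
  | succ n ih =>
    rw [show 2 * (n + 1) = 2 * n + 1 + 1 by ring, ascPochhammer_succ_eval,
      ascPochhammer_succ_eval, ih, ascPochhammer_succ_eval, ascPochhammer_succ_eval]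
    have h2 : (2 : K) ≠ 0 := two_ne_zero
    push_cast
    field_simp
    ring

theorem four_pow_mul_ascPochhammer_eval_three_halves {K : Type*} [Field K] [NeZero (2 : K)]
    (n : ℕ) : 4 ^ n * ((ascPochhammer K n).eval (3 / 2) * (n ! : K)) = ((2 * n + 1)! : K) := by
  induction n with
  | zero => simp
  | succ n ih =>
    rw [show 2 * (n + 1) + 1 = 2 * n + 1 + 1 + 1 by ring, Nat.factorial_succ (2 * n + 1 + 1),
      Nat.factorial_succ (2 * n + 1), ascPochhammer_succ_eval, Nat.factorial_succ]
    push_cast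
    rw [← ih]
    have h2 : (2 : K) ≠ 0 := two_ne_zero
    field_simp
    ring

theorem Ring.factorial_mul_choose_one_sub {K : Type*} [Field K] [CharZero K] (b : K) (n : ℕ) :
    ((n + 1)! : K) * Ring.choose (1 - b) (n + 1) =
      (-1) ^ n * (1 - b) * (ascPochhammer K n).eval b := by
  have hneg : (ascPochhammer K n).eval (1 - b - n) = (-1) ^ n * (ascPochhammer K n).eval b := by
    rw [show 1 - b - n = -(b + n - 1) by ring, ascPochhammer_eval_neg_eq_descPochhammer,
      descPochhammer_eval_eq_ascPochhammer, show b + n - 1 - n + 1 = b by ring]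
  rw [← nsmul_eq_mul, ← Ring.descPochhammer_eq_factorial_smul_choose,
    Polynomial.descPochhammer_smeval_eq_ascPochhammer, Polynomial.ascPochhammer_smeval_eq_eval,
    ascPochhammer_succ_eval]
  push_cast
  rw [show 1 - b - (n + 1) + 1 = 1 - b - n by ring, hneg]
  ring

theorem Ring.choose_one_sub_two_mul_two_mul_add_one {K : Type*} [Field K] [CharZero K]
    (a : K) (n : ℕ) :
    Ring.choose (1 - 2 * a) (2 * n + 1) = (1 - 2 * a) *
      ((ascPochhammer K n).eval a * (ascPochhammer K n).eval (a + 1 / 2) /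
        ((ascPochhammer K n).eval (3 / 2) * n !)) := by
  have hfac : ((2 * n + 1)! : K) ≠ 0 := by exact_mod_cast (2 * n + 1).factorial_ne_zero
  rw [← four_pow_mul_ascPochhammer_eval_three_halves] at hfac
  have h := Ring.factorial_mul_choose_one_sub (2 * a) (2 * n)
  rw [pow_mul, neg_one_sq, one_pow, one_mul, ascPochhammer_eval_two_mul,
    ← four_pow_mul_ascPochhammer_eval_three_halves] at h
  rw [mul_div_assoc', eq_div_iff (right_ne_zero_of_mul hfac)]
  apply mul_left_cancel₀ (left_ne_zero_of_mul hfac)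
  linear_combination h

theorem HasSum.comp_two_mul_add_one {M : Type*} [AddCommMonoid M] [TopologicalSpace M]
    {f : ℕ → M} {a : M} (h : HasSum f a) (hf : ∀ n, f (2 * n) = 0) :
    HasSum (fun n ↦ f (2 * n + 1)) a := by
  have hinj : Function.Injective (fun n : ℕ ↦ 2 * n + 1) := fun m n h ↦ by simp_all
  refine (hinj.hasSum_iff fun n hn ↦ ?_).mpr h
  obtain ⟨k, rfl⟩ : Even n := by
    rcases Nat.even_or_odd n with he | ⟨k, rfl⟩
    · exact he
    · exact absurd ⟨k, rfl⟩ hn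
  rw [← two_mul]
  exact hf k

namespace Complex

theorem hasSum_choose_mul_pow (a : ℂ) {z : ℂ} (hz : ‖z‖ < 1) :
    HasSum (fun n ↦ Ring.choose a n * z ^ n) ((1 + z) ^ a) := by
  have := (one_add_cpow_hasFPowerSeriesOnBall_zero (a := a)).hasSum (y := z)
    (by simpa [← ofReal_norm] using hz)
  simpa [binomialSeries, mul_comm] using this

theorem summable_norm_choose_mul_pow (a : ℂ) {z : ℂ} (hz : ‖z‖ < 1) :
    Summable (fun n ↦ ‖Ring.choose a n * z ^ n‖) := by
  have := (binomialSeries ℂ a).summable_norm_apply (x := z) (by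
    rw [Metric.mem_eball, edist_zero_right]
    exact lt_of_lt_of_le (by simpa [← ofReal_norm] using hz) binomialSeries_radius_ge_one)
  simpa [binomialSeries, mul_comm] using this

theorem norm_one_add_ofReal_mul_I (x : ℝ) : ‖1 + x * I‖ = √(1 + x ^ 2) := by
  rw [norm_def, ← ofReal_one, normSq_add_mul_I, one_pow]

theorem arg_one_add_ofReal_mul_I (x : ℝ) : arg (1 + x * I) = Real.arctan x := by
  rw [arg_of_re_nonneg (by simp), norm_one_add_ofReal_mul_I, Real.arctan_eq_arcsin]
  simp

theorem im_one_add_ofReal_mul_I_cpow (x ν : ℝ) :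
    ((1 + x * I) ^ (ν : ℂ)).im = (1 + x ^ 2) ^ (ν / 2) * Real.sin (ν * Real.arctan x) := by
  rw [cpow_ofReal_im, norm_one_add_ofReal_mul_I, arg_one_add_ofReal_mul_I,
    Real.sqrt_eq_rpow, ← Real.rpow_mul (by positivity), mul_comm (Real.arctan x)]
  ring_nf

theorem ofReal_mul_I_pow_two_mul (x : ℝ) (n : ℕ) :
    ((x : ℂ) * I) ^ (2 * n) = ((-x ^ 2) ^ n : ℝ) := by
  rw [pow_mul, mul_pow, I_sq]
  push_cast
  ring

theorem choose_mul_ofReal_mul_I_pow_two_mul (ν x : ℝ) (n : ℕ) :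
    Ring.choose (ν : ℂ) (2 * n) * (x * I) ^ (2 * n) =
      (Ring.choose ν (2 * n) * (-x ^ 2) ^ n : ℝ) := by
  rw [ofReal_mul_I_pow_two_mul, ofReal_mul, ofReal_choose]

theorem choose_mul_ofReal_mul_I_pow_two_mul_add_one (ν x : ℝ) (n : ℕ) :
    Ring.choose (ν : ℂ) (2 * n + 1) * (x * I) ^ (2 * n + 1) =
      (Ring.choose ν (2 * n + 1) * x * (-x ^ 2) ^ n : ℝ) * I := by
  rw [pow_succ, ofReal_mul_I_pow_two_mul]
  push_cast
  ring

end Complex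

open Complex in
theorem Real.hasSum_choose_two_mul_add_one_mul_pow (ν : ℝ) {x : ℝ} (hx : |x| < 1) :
    HasSum (fun n ↦ Ring.choose ν (2 * n + 1) * x * (-x ^ 2) ^ n)
      ((1 + x ^ 2) ^ (ν / 2) * Real.sin (ν * Real.arctan x)) := by
  have hz : ‖(x : ℂ) * I‖ < 1 := by simpa using hx
  have him := (hasSum_choose_mul_pow ν hz).mapL imCLM
  rw [imCLM_apply, im_one_add_ofReal_mul_I_cpow] at him
  have hodd := him.comp_two_mul_add_one fun n ↦ by
    rw [imCLM_apply, choose_mul_ofReal_mul_I_pow_two_mul, ofReal_im]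
  simpa only [imCLM_apply, choose_mul_ofReal_mul_I_pow_two_mul_add_one, mul_I_im, ofReal_re]
    using hodd

open Complex in
theorem Real.summable_abs_choose_two_mul_add_one_mul_pow (ν : ℝ) {x : ℝ} (hx : |x| < 1) :
    Summable (fun n ↦ |Ring.choose ν (2 * n + 1) * x * (-x ^ 2) ^ n|) := by
  have hz : ‖(x : ℂ) * I‖ < 1 := by simpa using hx
  have hinj : Function.Injective (fun n : ℕ ↦ 2 * n + 1) := fun m n h ↦ by simp_all
  refine ((summable_norm_choose_mul_pow ν hz).comp_injective hinj).congr fun n ↦ ?_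
  rw [Function.comp_apply, choose_mul_ofReal_mul_I_pow_two_mul_add_one, norm_mul, norm_I,
    mul_one, norm_real, Real.norm_eq_abs]

theorem stmt_11 (α x : ℝ) (hα : α ≠ 1 / 2) (hx0 : 0 < |x|) (hx1 : |x| < 1) :
    Summable (fun r : ℕ =>
      |(ascPochhammer ℝ r).eval α * (ascPochhammer ℝ r).eval (α + 1 / 2) /
        ((ascPochhammer ℝ r).eval (3 / 2) * (Nat.factorial r)) * (-x ^ 2) ^ r|) ∧
    ∑' r : ℕ, (ascPochhammer ℝ r).eval α * (ascPochhammer ℝ r).eval (α + 1 / 2) /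
        ((ascPochhammer ℝ r).eval (3 / 2) * (Nat.factorial r)) * (-x ^ 2) ^ r =
      (1 + x ^ 2) ^ ((1 - 2 * α) / 2) * Real.sin ((1 - 2 * α) * Real.arctan x) /
        ((1 - 2 * α) * x) := by
  have hνx : (1 - 2 * α) * x ≠ 0 :=
    mul_ne_zero (by contrapose! hα; linarith) (abs_pos.mp hx0)
  have hterm (r : ℕ) : (ascPochhammer ℝ r).eval α * (ascPochhammer ℝ r).eval (α + 1 / 2) /
        ((ascPochhammer ℝ r).eval (3 / 2) * (Nat.factorial r)) * (-x ^ 2) ^ r =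
      Ring.choose (1 - 2 * α) (2 * r + 1) * x * (-x ^ 2) ^ r / ((1 - 2 * α) * x) := by
    rw [eq_div_iff hνx, Ring.choose_one_sub_two_mul_two_mul_add_one]
    ring
  simp only [hterm, abs_div]
  exact ⟨(Real.summable_abs_choose_two_mul_add_one_mul_pow _ hx1).div_const _,
    ((Real.hasSum_choose_two_mul_add_one_mul_pow _ hx1).div_const _).tsum_eq⟩
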